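/- If ξ : (0,∞) → ℝ is a differentiable solution of 2·((n-1)/n)·ξ(s) = (2n + 2ξ'(s))·s such that lim_{ε→0⁺} ε^{-(n-1)/n}·ξ(ε) = n²(n+1)^{2/n}ω^{2/n}, then ξ(s) = n²(n+1)^{2/n}ω^{2/n}·s^{(n-1)/n} − n²·s for all s > 0. -/

import Mathlib

open Filter Topology

/-- A differentiable solution of `2((n-1)/n) ξ(s) = (2n + 2ξ'(s)) s` with
`lim_{ε→0⁺} ε^{-(n-1)/n} ξ(ε) = n²(n+1)^{2/n} ω^{2/n}` is the explicit function
`ξ(s) = n²(n+1)^{2/n} ω^{2/n} s^{(n-1)/n} − n² s`. -/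
theorem stmt6 (n : ℕ) (hn : 2 ≤ n) (ω : ℝ) (hω : 0 < ω) (ξ ξ' : ℝ → ℝ)
    (hd : ∀ s : ℝ, 0 < s → HasDerivAt ξ (ξ' s) s)
    (hode : ∀ s : ℝ, 0 < s → 2 * (((n : ℝ) - 1) / n) * ξ s = (2 * n + 2 * ξ' s) * s)
    (hlim : Tendsto (fun ε : ℝ => ε ^ (-(((n : ℝ) - 1) / n)) * ξ ε) (𝓝[>] 0)
      (𝓝 ((n : ℝ) ^ 2 * ((n : ℝ) + 1) ^ ((2 : ℝ) / n) * ω ^ ((2 : ℝ) / n)))) :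
    ∀ s : ℝ, 0 < s →
      ξ s = (n : ℝ) ^ 2 * ((n : ℝ) + 1) ^ ((2 : ℝ) / n) * ω ^ ((2 : ℝ) / n)
          * s ^ (((n : ℝ) - 1) / n) - (n : ℝ) ^ 2 * s := by
  have hn0 : (0 : ℝ) < (n : ℝ) := by positivity
  set α : ℝ := ((n : ℝ) - 1) / n with hα
  set C : ℝ := (n : ℝ) ^ 2 * ((n : ℝ) + 1) ^ ((2 : ℝ) / n) * ω ^ ((2 : ℝ) / n) with hC
  set g : ℝ → ℝ := fun s => s ^ (-α) * (ξ s + (n : ℝ) ^ 2 * s) with hg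
  -- g has derivative 0 on (0, ∞)
  have hgd : ∀ s : ℝ, 0 < s → HasDerivAt g 0 s := by
    intro s hs
    have h1 : HasDerivAt (fun x : ℝ => x ^ (-α)) (-α * s ^ (-α - 1)) s :=
      Real.hasDerivAt_rpow_const (Or.inl hs.ne')
    have h2 : HasDerivAt (fun x : ℝ => ξ x + (n : ℝ) ^ 2 * x) (ξ' s + (n : ℝ) ^ 2) s :=
      (hd s hs).add (by simpa using (hasDerivAt_id s).const_mul ((n : ℝ) ^ 2))
    have h3 := h1.mul h2
    have key : -α * s ^ (-α - 1) * (ξ s + (n : ℝ) ^ 2 * s)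
        + s ^ (-α) * (ξ' s + (n : ℝ) ^ 2) = 0 := by
      have hsplit : s ^ (-α) = s ^ (-α - 1) * s := by
        rw [← Real.rpow_add_one hs.ne']; ring_nf
      rw [hsplit]
      have hode' := hode s hs
      have hαn : α * (n : ℝ) = (n : ℝ) - 1 := by
        rw [hα]; field_simp
      have hbr : -α * (ξ s + (n : ℝ) ^ 2 * s) + s * (ξ' s + (n : ℝ) ^ 2) = 0 := by
        have : α * ξ s = ((n : ℝ) + ξ' s) * s := by linarith
        linear_combination -this - s * (n : ℝ) * hαn
      linear_combination s ^ (-α - 1) * hbr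
    show HasDerivAt (fun y : ℝ => y ^ (-α) * (ξ y + (n : ℝ) ^ 2 * y)) 0 s
    exact key ▸ h3
  -- g is constant on (0, ∞)
  have hconst : ∀ s t : ℝ, 0 < s → 0 < t → g s = g t := by
    intro s t hs ht
    have hdiff : DifferentiableOn ℝ g (Set.Ioi (0 : ℝ)) := fun x hx =>
      (hgd x hx).differentiableAt.differentiableWithinAt
    refine (convex_Ioi (0 : ℝ)).is_const_of_fderivWithin_eq_zero hdiff ?_ hs ht
    intro x hx
    rw [fderivWithin_of_isOpen isOpen_Ioi hx, (hgd x hx).hasFDerivAt.fderiv]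
    ext y
    simp
  -- limit of g at 0⁺ is C
  have hpow : Tendsto (fun ε : ℝ => (n : ℝ) ^ 2 * ε ^ (1 - α)) (𝓝[>] 0) (𝓝 0) := by
    have h1α : 0 < 1 - α := by
      have : ((n : ℝ) - 1) / n < 1 := by rw [div_lt_one hn0]; linarith
      rw [hα]; linarith
    have := (Real.continuousAt_rpow_const 0 (1 - α) (Or.inr h1α.le)).tendsto
    rw [Real.zero_rpow h1α.ne'] at this
    have h2 : Tendsto (fun ε : ℝ => (n : ℝ) ^ 2 * ε ^ (1 - α)) (𝓝[>] 0) (𝓝 ((n:ℝ)^2 * 0)) :=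
      (this.const_mul ((n : ℝ) ^ 2)).mono_left nhdsWithin_le_nhds
    simpa using h2
  have hglim : Tendsto g (𝓝[>] 0) (𝓝 C) := by
    have heq : ∀ ε ∈ Set.Ioi (0 : ℝ),
        ε ^ (-α) * ξ ε + (n : ℝ) ^ 2 * ε ^ (1 - α) = g ε := by
      intro ε hε
      have : ε ^ (-α) * ε = ε ^ (1 - α) := by
        rw [← Real.rpow_add_one (ne_of_gt hε)]; ring_nf
      simp only [hg]; rw [mul_add]; rw [← mul_assoc, mul_comm (ε ^ (-α)) ((n:ℝ)^2), mul_assoc,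
        this]
    have := (hlim.add hpow)
    rw [add_zero] at this
    exact this.congr' (eventually_nhdsWithin_of_forall heq)
  -- conclude g = C on (0,∞)
  intro s hs
  have hgs : g s = C := by
    have h1 : Tendsto g (𝓝[>] 0) (𝓝 (g s)) := by
      have : g =ᶠ[𝓝[>] 0] fun _ => g s :=
        eventually_nhdsWithin_of_forall (fun t ht => hconst t s ht hs)
      exact tendsto_const_nhds.congr' this.symm
    exact tendsto_nhds_unique h1 hglim
  have hne : s ^ (-α) ≠ 0 := (Real.rpow_pos_of_pos hs _).ne'
  have : s ^ (-α) * (ξ s + (n : ℝ) ^ 2 * s) = C := hgs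
  have hmul : s ^ (-α) * s ^ α = 1 := by
    rw [← Real.rpow_add hs]; simp
  have hfin : ξ s + (n : ℝ) ^ 2 * s = C * s ^ α := by
    have h2 := congrArg (· * s ^ α) this
    rw [show s ^ (-α) * (ξ s + (n : ℝ) ^ 2 * s) * s ^ α
        = s ^ (-α) * s ^ α * (ξ s + (n : ℝ) ^ 2 * s) from by ring, hmul, one_mul] at h2
    exact h2
  linarith
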